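/- arXiv:2102.06196 — 2 statements merged into one kernel-verified Lean document; each statement's English description precedes it below -/
import Mathlib

section
/- Let K : [0,∞) → L(Y) with ‖K(t)‖ ≤ Q e^{-ωt}, Q ≥ 0, ω > 0, and let g : [0,∞) → Y be continuous and bounded. Then limsup_{t→∞} ‖(K∗g)(t)‖ ≤ (Q/ω) · limsup_{t→∞} ‖g(t)‖. -/
/-!
Fix `B > limsup ‖g‖` and a time `T` after which `‖g‖ ≤ B`, and split `(K ∗ g)(t)` at `T`.
Since `∫ₐᵇ e^{-ω(t-τ)} dτ ≤ e^{-ω(t-b)}/ω`, the piece over `[0, T]` is at most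
`Q M e^{-ω(t-T)}/ω → 0` (with `M` a global bound of `‖g‖`), and the piece over `[T, t]` is at
most `Q B/ω`. Hence `limsup ‖K ∗ g‖ ≤ Q B/ω`, and `B ↓ limsup ‖g‖` gives the claim.
-/

open Filter Set Real Topology

theorem integral_exp_neg_mul_sub {ω : ℝ} (hω : ω ≠ 0) (a b t : ℝ) :
    ∫ τ in a..b, exp (-ω * (t - τ)) = (exp (-ω * (t - b)) - exp (-ω * (t - a))) / ω := by
  have hderiv : ∀ τ ∈ uIcc a b,
      HasDerivAt (fun τ => exp (-ω * (t - τ)) / ω) (exp (-ω * (t - τ))) τ := by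
    intro τ _
    have := (((hasDerivAt_id τ).const_sub t).const_mul (-ω)).exp.div_const ω
    refine this.congr_deriv ?_
    simp only [id, mul_neg, mul_one, neg_neg]
    field_simp
  rw [intervalIntegral.integral_eq_sub_of_hasDerivAt hderiv
    (Continuous.intervalIntegrable (by fun_prop) a b), sub_div]

theorem integral_exp_neg_mul_sub_le {ω : ℝ} (hω : 0 < ω) (a b t : ℝ) :
    ∫ τ in a..b, exp (-ω * (t - τ)) ≤ exp (-ω * (t - b)) / ω := by
  rw [integral_exp_neg_mul_sub hω.ne']
  gcongr
  linarith [exp_pos (-ω * (t - a))]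

theorem norm_integral_le_of_norm_le_mul_exp {E : Type*} [NormedAddCommGroup E] [NormedSpace ℝ E]
    {f : ℝ → E} {C ω a b t : ℝ} (hω : 0 < ω) (hC : 0 ≤ C) (hab : a ≤ b)
    (hf : ∀ τ ∈ Ioc a b, ‖f τ‖ ≤ C * exp (-ω * (t - τ))) :
    ‖∫ τ in a..b, f τ‖ ≤ C * exp (-ω * (t - b)) / ω := by
  calc ‖∫ τ in a..b, f τ‖ ≤ ∫ τ in a..b, C * exp (-ω * (t - τ)) :=
        intervalIntegral.norm_integral_le_of_norm_le hab (Filter.Eventually.of_forall hf)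
          (Continuous.intervalIntegrable (by fun_prop) a b)
    _ = C * ∫ τ in a..b, exp (-ω * (t - τ)) := intervalIntegral.integral_const_mul _ _
    _ ≤ C * (exp (-ω * (t - b)) / ω) := by gcongr; exact integral_exp_neg_mul_sub_le hω a b t
    _ = C * exp (-ω * (t - b)) / ω := by ring

section Convolution

variable {Y : Type*} [NormedAddCommGroup Y] [NormedSpace ℝ Y]
  {K : ℝ → Y →L[ℝ] Y} {g : ℝ → Y} {Q ω : ℝ}

theorem norm_apply_le_of_norm_le_exp (hK : ∀ t ≥ (0:ℝ), ‖K t‖ ≤ Q * exp (-ω * t))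
    {t τ B : ℝ} (hτt : τ ≤ t) (hgτ : ‖g τ‖ ≤ B) :
    ‖K (t - τ) (g τ)‖ ≤ Q * B * exp (-ω * (t - τ)) := by
  have hKτ := hK (t - τ) (sub_nonneg.mpr hτt)
  calc ‖K (t - τ) (g τ)‖ ≤ ‖K (t - τ)‖ * ‖g τ‖ := (K (t - τ)).le_opNorm _
    _ ≤ Q * exp (-ω * (t - τ)) * B :=
        mul_le_mul hKτ hgτ (norm_nonneg _) ((norm_nonneg _).trans hKτ)
    _ = Q * B * exp (-ω * (t - τ)) := by ring

theorem norm_integral_convolution_le (hQ : 0 ≤ Q) (hω : 0 < ω)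
    (hK : ∀ t ≥ (0:ℝ), ‖K t‖ ≤ Q * exp (-ω * t)) {M B T t : ℝ} (hM : ∀ τ, ‖g τ‖ ≤ M)
    (hB : 0 ≤ B) (hgB : ∀ τ ≥ T, ‖g τ‖ ≤ B) (hT : 0 ≤ T) (hTt : T ≤ t)
    (hint : IntervalIntegrable (fun τ => K (t - τ) (g τ)) MeasureTheory.volume 0 t) :
    ‖∫ τ in (0:ℝ)..t, K (t - τ) (g τ)‖ ≤ Q * M * exp (-ω * (t - T)) / ω + Q * B / ω := by
  have hM0 : 0 ≤ M := (norm_nonneg _).trans (hM 0)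
  have hhead : ‖∫ τ in (0:ℝ)..T, K (t - τ) (g τ)‖ ≤ Q * M * exp (-ω * (t - T)) / ω :=
    norm_integral_le_of_norm_le_mul_exp hω (by positivity) hT fun τ hτ =>
      norm_apply_le_of_norm_le_exp hK (hτ.2.trans hTt) (hM τ)
  have htail : ‖∫ τ in T..t, K (t - τ) (g τ)‖ ≤ Q * B / ω := by
    simpa using norm_integral_le_of_norm_le_mul_exp hω (by positivity) hTt fun τ hτ =>
      norm_apply_le_of_norm_le_exp hK hτ.2 (hgB τ hτ.1.le)
  have hTmem : T ∈ uIcc 0 t := mem_uIcc_of_le hT hTt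
  rw [← intervalIntegral.integral_add_adjacent_intervals
    (hint.mono_set (uIcc_subset_uIcc_left hTmem)) (hint.mono_set (uIcc_subset_uIcc_right hTmem))]
  exact (norm_add_le _ _).trans (add_le_add hhead htail)

theorem limsup_norm_integral_convolution_le (hQ : 0 ≤ Q) (hω : 0 < ω)
    (hK : ∀ t ≥ (0:ℝ), ‖K t‖ ≤ Q * exp (-ω * t)) {M B : ℝ} (hM : ∀ τ, ‖g τ‖ ≤ M)
    (hgB : ∀ᶠ τ in atTop, ‖g τ‖ ≤ B)
    (hint : ∀ t ≥ (0:ℝ),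
      IntervalIntegrable (fun τ => K (t - τ) (g τ)) MeasureTheory.volume 0 t) :
    limsup (fun t => ‖∫ τ in (0:ℝ)..t, K (t - τ) (g τ)‖) atTop ≤ Q / ω * B := by
  obtain ⟨T₀, hT₀⟩ := eventually_atTop.mp hgB
  set T := max T₀ 0
  have hB : 0 ≤ B := (norm_nonneg _).trans (hT₀ T₀ le_rfl)
  have hbound : Tendsto (fun t => Q * M * exp (-ω * (t - T)) / ω + Q * B / ω) atTop
      (𝓝 (Q / ω * B)) := by
    have hexp : Tendsto (fun t => exp (-ω * (t - T))) atTop (𝓝 0) :=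
      tendsto_exp_atBot.comp <|
        (tendsto_atTop_add_const_right atTop (-T) tendsto_id).const_mul_atTop_of_neg (neg_lt_zero.mpr hω)
    convert ((hexp.const_mul (Q * M)).div_const ω).add_const (Q * B / ω) using 2
    ring
  calc limsup (fun t => ‖∫ τ in (0:ℝ)..t, K (t - τ) (g τ)‖) atTop
      ≤ limsup (fun t => Q * M * exp (-ω * (t - T)) / ω + Q * B / ω) atTop := by
        refine limsup_le_limsup ?_ (isCoboundedUnder_le_of_le atTop fun _ => norm_nonneg _)
          hbound.isBoundedUnder_le
        filter_upwards [eventually_ge_atTop T] with t ht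
        exact norm_integral_convolution_le hQ hω hK hM hB
          (fun τ hτ => hT₀ τ ((le_max_left _ _).trans hτ)) (le_max_right _ _) ht
          (hint t ((le_max_right _ _).trans ht))
    _ = Q / ω * B := hbound.limsup_eq

end Convolution

theorem stmt14_general {Y : Type*} [NormedAddCommGroup Y] [NormedSpace ℝ Y]
    (K : ℝ → Y →L[ℝ] Y) (g : ℝ → Y) (Q ω : ℝ) (hQ : 0 ≤ Q) (hω : 0 < ω)
    (hK : ∀ t ≥ (0:ℝ), ‖K t‖ ≤ Q * Real.exp (-ω * t))
    (hgb : ∃ M, ∀ t, ‖g t‖ ≤ M)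
    (hint : ∀ t ≥ (0:ℝ),
      IntervalIntegrable (fun τ => (K (t - τ)) (g τ)) MeasureTheory.volume 0 t) :
    Filter.limsup (fun t => ‖∫ τ in (0:ℝ)..t, (K (t - τ)) (g τ)‖) Filter.atTop
      ≤ (Q / ω) * Filter.limsup (fun t => ‖g t‖) Filter.atTop := by
  obtain ⟨M, hM⟩ := hgb
  have hbdd : IsBoundedUnder (· ≤ ·) atTop (fun t => ‖g t‖) := isBoundedUnder_of ⟨M, hM⟩
  refine ge_of_tendsto (x := 𝓝[>] limsup (fun t => ‖g t‖) atTop)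
    (((continuous_const_mul (Q / ω)).tendsto _).mono_left nhdsWithin_le_nhds)
    (eventually_nhdsWithin_of_forall fun B hB => ?_)
  exact limsup_norm_integral_convolution_le hQ hω hK hM
    ((eventually_lt_of_limsup_lt hB hbdd).mono fun _ => le_of_lt) hint

theorem stmt14 {Y : Type*} [NormedAddCommGroup Y] [NormedSpace ℝ Y] [CompleteSpace Y]
    (K : ℝ → Y →L[ℝ] Y) (g : ℝ → Y) (Q ω : ℝ) (hQ : 0 ≤ Q) (hω : 0 < ω)
    (hK : ∀ t ≥ (0:ℝ), ‖K t‖ ≤ Q * Real.exp (-ω * t))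
    (hg : Continuous g) (hgb : ∃ M, ∀ t, ‖g t‖ ≤ M)
    (hint : ∀ t ≥ (0:ℝ),
      IntervalIntegrable (fun τ => (K (t - τ)) (g τ)) MeasureTheory.volume 0 t) :
    Filter.limsup (fun t => ‖∫ τ in (0:ℝ)..t, (K (t - τ)) (g τ)‖) Filter.atTop
      ≤ (Q / ω) * Filter.limsup (fun t => ‖g t‖) Filter.atTop :=
  stmt14_general K g Q ω hQ hω hK hgb hint
end

section
/- Let A_β generate a semigroup with ‖e^{A_β t}‖ ≤ M_β e^{-ω_β t} (M_β ≥ 1, ω_β > 0), let f : Z → Z satisfy ‖f(φ₁) − f(φ₂)‖ ≤ ε‖φ₁ − φ₂‖ with ε D_{A_β} < 1, where D_{A_β} := ∫₀^∞ ‖e^{A_β t} I₀‖ dt, f(0) = 0, and let z̄ : [0,∞) → Z be continuous satisfying the integral equation z̄(t) = ∫₀^t e^{A_β(t-τ)} (1/β) B e(τ) dτ + ∫₀^t e^{A_β(t-τ)} I₀ f(z̄(τ)) dτ for a continuous bounded e : [0,∞) → ℝ, with D_B := ∫₀^∞ ‖e^{A_β t} (1/β) B‖ dt < ∞. Then sup_{[0,t]}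 ‖z̄‖ ≤ (D_B / (1 − ε D_{A_β})) · sup_{[0,t]} |e|. -/
open MeasureTheory

lemma stmt19_aux {Z E : Type*} [NormedAddCommGroup Z] [NormedSpace ℝ Z] [CompleteSpace Z]
    [NormedAddCommGroup E] [NormedSpace ℝ E]
    (S : ℝ → Z →L[ℝ] Z) (C : E →L[ℝ] Z) (u : ℝ → E) (s c : ℝ) (hs : 0 ≤ s) (hc : 0 ≤ c)
    (hu : ∀ τ ∈ Set.Icc (0:ℝ) s, ‖u τ‖ ≤ c)
    (hint : IntegrableOn (fun t => ‖(S t) ∘L C‖) (Set.Ici (0:ℝ))) :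
    ‖∫ τ in (0:ℝ)..s, (S (s - τ)) (C (u τ))‖
      ≤ (∫ t in Set.Ici (0:ℝ), ‖(S t) ∘L C‖) * c := by
  have hg : IntervalIntegrable (fun t => ‖(S t) ∘L C‖) volume 0 s := by
    rw [intervalIntegrable_iff_integrableOn_Ioc_of_le hs]
    exact hint.mono_set (fun x hx => le_of_lt hx.1)
  have hg' : IntervalIntegrable (fun τ => ‖(S (s - τ)) ∘L C‖) volume 0 s := by
    have := (hg.comp_sub_left s).symm
    simpa using this
  have h1 : ‖∫ τ in (0:ℝ)..s, (S (s - τ)) (C (u τ))‖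
      ≤ ∫ τ in (0:ℝ)..s, ‖(S (s - τ)) (C (u τ))‖ :=
    intervalIntegral.norm_integral_le_integral_norm hs
  have h2 : (∫ τ in (0:ℝ)..s, ‖(S (s - τ)) (C (u τ))‖)
      ≤ ∫ τ in (0:ℝ)..s, ‖(S (s - τ)) ∘L C‖ * c := by
    rw [intervalIntegral.integral_of_le hs, intervalIntegral.integral_of_le hs]
    apply integral_mono_of_nonneg
    · filter_upwards with τ using norm_nonneg _
    · exact (hg'.1.mono_set (by simp)).mul_const c
    · filter_upwards [ae_restrict_mem measurableSet_Ioc] with τ hτ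
      calc ‖(S (s - τ)) (C (u τ))‖ = ‖((S (s - τ)) ∘L C) (u τ)‖ := rfl
        _ ≤ ‖(S (s - τ)) ∘L C‖ * ‖u τ‖ := ContinuousLinearMap.le_opNorm _ _
        _ ≤ ‖(S (s - τ)) ∘L C‖ * c :=
            mul_le_mul_of_nonneg_left (hu τ ⟨le_of_lt hτ.1, hτ.2⟩) (norm_nonneg _)
  have h3 : (∫ τ in (0:ℝ)..s, ‖(S (s - τ)) ∘L C‖ * c)
      = (∫ τ in (0:ℝ)..s, ‖(S τ) ∘L C‖) * c := by
    rw [intervalIntegral.integral_mul_const]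
    congr 1
    have := intervalIntegral.integral_comp_sub_left (fun t => ‖(S t) ∘L C‖) s
      (a := (0:ℝ)) (b := s)
    simpa using this
  have h4 : (∫ τ in (0:ℝ)..s, ‖(S τ) ∘L C‖) ≤ ∫ t in Set.Ici (0:ℝ), ‖(S t) ∘L C‖ := by
    rw [intervalIntegral.integral_of_le hs]
    apply setIntegral_mono_set hint
    · filter_upwards with τ using norm_nonneg _
    · filter_upwards with τ using fun hx => le_of_lt hx.1
  calc ‖∫ τ in (0:ℝ)..s, (S (s - τ)) (C (u τ))‖
      ≤ (∫ τ in (0:ℝ)..s, ‖(S τ) ∘L C‖) * c := by rw [← h3]; exact h1.trans h2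
    _ ≤ (∫ t in Set.Ici (0:ℝ), ‖(S t) ∘L C‖) * c := mul_le_mul_of_nonneg_right h4 hc

theorem stmt19 {Z : Type*} [NormedAddCommGroup Z] [NormedSpace ℝ Z] [CompleteSpace Z]
    (S : ℝ → Z →L[ℝ] Z) (I0 : Z →L[ℝ] Z) (B : ℝ →L[ℝ] Z)
    (β Mβ ωβ ε DA DB : ℝ)
    (hβ0 : 0 < β) (hβ1 : β < 1) (hM : 1 ≤ Mβ) (hω : 0 < ωβ)
    (hS : ∀ t ≥ (0:ℝ), ‖S t‖ ≤ Mβ * Real.exp (-ωβ * t))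
    (f : Z → Z) (hε : 0 ≤ ε) (hf : ∀ x y, ‖f x - f y‖ ≤ ε * ‖x - y‖) (hf0 : f 0 = 0)
    (hDA : DA = ∫ t in Set.Ici (0:ℝ), ‖(S t) ∘L I0‖)
    (hsmall : ε * DA < 1)
    (hDB : DB = ∫ t in Set.Ici (0:ℝ), ‖(S t) ∘L ((1 / β) • B)‖)
    (hDBfin : MeasureTheory.IntegrableOn (fun t => ‖(S t) ∘L ((1 / β) • B)‖) (Set.Ici (0:ℝ)))
    (hDAfin : MeasureTheory.IntegrableOn (fun t => ‖(S t) ∘L I0‖) (Set.Ici (0:ℝ)))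
    (z : ℝ → Z) (e : ℝ → ℝ) (hz : Continuous z) (he : Continuous e)
    (heb : ∃ M, ∀ t, |e t| ≤ M)
    (heq : ∀ t ≥ (0:ℝ), z t =
      (∫ τ in (0:ℝ)..t, (S (t - τ)) ((1 / β) • (B (e τ))))
        + ∫ τ in (0:ℝ)..t, (S (t - τ)) (I0 (f (z τ)))) :
    ∀ t ≥ (0:ℝ), ∀ Me : ℝ, (∀ s ∈ Set.Icc (0:ℝ) t, |e s| ≤ Me) →
      ∀ s ∈ Set.Icc (0:ℝ) t, ‖z s‖ ≤ (DB / (1 - ε * DA)) * Me := by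
  intro t ht Me hMe
  have hden : 0 < 1 - ε * DA := by linarith
  have hMe0 : 0 ≤ Me := (abs_nonneg _).trans (hMe 0 ⟨le_refl 0, ht⟩)
  -- max of ‖z‖ on [0,t]
  obtain ⟨s₀, hs₀mem, hs₀max⟩ := isCompact_Icc.exists_isMaxOn (Set.nonempty_Icc.2 ht)
    (hz.norm.continuousOn (s := Set.Icc (0:ℝ) t))
  set K := ‖z s₀‖ with hKdef
  have hK0 : 0 ≤ K := norm_nonneg _
  have hKle : ∀ s ∈ Set.Icc (0:ℝ) t, ‖z s‖ ≤ K := fun s hs => hs₀max hs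
  -- key bound at s₀
  have hbound : K ≤ DB * Me + DA * (ε * K) := by
    have hs₀0 : (0:ℝ) ≤ s₀ := hs₀mem.1
    calc K = ‖(∫ τ in (0:ℝ)..s₀, (S (s₀ - τ)) ((1 / β) • (B (e τ))))
        + ∫ τ in (0:ℝ)..s₀, (S (s₀ - τ)) (I0 (f (z τ)))‖ := by rw [hKdef, heq s₀ hs₀0]
      _ ≤ DB * Me + DA * (ε * K) := (norm_add_le _ _).trans (add_le_add ?_ ?_)
    · have := stmt19_aux S ((1 / β) • B) e s₀ Me hs₀0 hMe0
        (fun τ hτ => by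
          rw [Real.norm_eq_abs]
          exact hMe τ ⟨hτ.1, hτ.2.trans hs₀mem.2⟩) hDBfin
      rw [hDB]
      simpa using this
    · have := stmt19_aux S I0 (fun τ => f (z τ)) s₀ (ε * K) hs₀0
        (mul_nonneg hε hK0)
        (fun τ hτ => by
          have : ‖f (z τ) - f 0‖ ≤ ε * ‖z τ - 0‖ := hf _ _
          rw [hf0, sub_zero, sub_zero] at this
          exact this.trans (mul_le_mul_of_nonneg_left
            (hKle τ ⟨hτ.1, hτ.2.trans hs₀mem.2⟩) hε)) hDAfin
      rw [hDA]
      exact this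
  have hKfinal : K ≤ (DB / (1 - ε * DA)) * Me := by
    rw [div_mul_eq_mul_div, le_div_iff₀ hden]
    nlinarith
  intro s hs
  exact (hKle s hs).trans hKfinal
end
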